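/- Let n ≥ 2 and let φ ∈ L^∞((0,∞)) be such that the limit φ(0^+) = lim_{t→0^+} φ(t) exists. Then lim_{ε→0^+} ∫_0^1 φ(t) ∫_{{y ∈ ℝ^n : |y| < ε}} ∂^2/∂y_1^2 ( e^{-|y|^2/(4t)} / (2√(π t))^n ) dy dt = -M · φ(0^+) · ∫_0^∞ e^{-1/(4s)} s^{-n/2 - 1} ds, where M = (2√π)^{-n} ∫_{{z̄ ∈ ℝ^{n-1} : |z̄| < 1}} √(1 - |z̄|^2) dz̄ > 0. -/

import Mathlib

open Real MeasureTheory Set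
open scoped ENNReal

/-- The Gauss–Weierstrass kernel `e^{-|y|²/(4t)}/(2√(πt))^n` on `ℝ^n`. -/
noncomputable def gaussKer (n : ℕ) (t : ℝ) (y : Fin n → ℝ) : ℝ :=
  Real.exp (-(∑ j, y j ^ 2) / (4 * t)) / (2 * Real.sqrt (π * t)) ^ n

/-- The second partial derivative `∂²/∂y₁²` of the Gauss–Weierstrass kernel. -/
noncomputable def d2GaussKer (n : ℕ) (hn : 0 < n) (t : ℝ) (y : Fin n → ℝ) : ℝ :=
  deriv (deriv (fun v : ℝ => gaussKer n t (Function.update y ⟨0, hn⟩ v))) (y ⟨0, hn⟩)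

/-- `α(ε) = ∫_0^1 φ(t) ∫_{|y|<ε} ∂²/∂y₁² (e^{-|y|²/(4t)}/(2√(πt))^n) dy dt`. -/
noncomputable def alphaFun (n : ℕ) (hn : 0 < n) (φ : ℝ → ℝ) (ε : ℝ) : ℝ :=
  ∫ t in Ioc (0 : ℝ) 1, φ t *
    ∫ y in {y : Fin n → ℝ | Real.sqrt (∑ j, y j ^ 2) < ε}, d2GaussKer n hn t y

/-- The constant `M = (2√π)^{-n} ∫_{|z̄|<1, z̄ ∈ ℝ^{n-1}} √(1-|z̄|²) dz̄`. -/
noncomputable def Mconst (n : ℕ) : ℝ :=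
  ((2 * Real.sqrt π) ^ n)⁻¹ *
    ∫ z in {z : Fin (n - 1) → ℝ | ∑ j, z j ^ 2 < 1}, Real.sqrt (1 - ∑ j, z j ^ 2)

/-!
Along every line parallel to the first axis, `∂²/∂y₁²` of the kernel is an exact derivative, so
its integral over the chord of the ball `|y| < ε` through `z̄ ∈ ℝ^{n-1}` reduces to boundary terms,
`-(√(ε² - |z̄|²) / t) e^{-ε²/(4t)} (2√(πt))^{-n}`. Integrating over `z̄` and rescaling
`z̄ = ε w̄` gives `∫_{|y|<ε} ∂²/∂y₁² (…) dy = -M ε^n e^{-ε²/(4t)} t^{-n/2-1}`. The substitution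
`t = ε² s` then writes `α(ε) = -M ∫_0^∞ φ(ε² s) 1_{ε² s ≤ 1} e^{-1/(4s)} s^{-n/2-1} ds`, and
dominated convergence, with the integrable bound `‖φ‖_∞ e^{-1/(4s)} s^{-n/2-1}`, yields the limit.
-/

open Filter Topology

lemma hasDerivAt_exp_neg_sq_add_div (t w x : ℝ) :
    HasDerivAt (fun x => exp (-(x ^ 2 + w) / (4 * t)))
      (-(x / (2 * t)) * exp (-(x ^ 2 + w) / (4 * t))) x := by
  have h : HasDerivAt (fun x => -(x ^ 2 + w) / (4 * t)) (-(x / (2 * t))) x :=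
    (((hasDerivAt_pow 2 x).add_const w).neg.div_const (4 * t)).congr_deriv (by ring)
  simpa only [mul_comm] using h.exp

lemma hasDerivAt_mul_exp_neg_sq_add_div (t w x : ℝ) :
    HasDerivAt (fun x => -(x / (2 * t)) * exp (-(x ^ 2 + w) / (4 * t)))
      ((x ^ 2 / (4 * t ^ 2) - 1 / (2 * t)) * exp (-(x ^ 2 + w) / (4 * t))) x :=
  (((hasDerivAt_id x).div_const (2 * t)).neg.mul
    (hasDerivAt_exp_neg_sq_add_div t w x)).congr_deriv (by simp only [id, Pi.neg_apply]; ring)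

lemma sum_sq_cons {m : ℕ} (x : ℝ) (z : Fin m → ℝ) :
    ∑ j, (Fin.cons x z : Fin (m + 1) → ℝ) j ^ 2 = x ^ 2 + ∑ j, z j ^ 2 := by
  simp [Fin.sum_univ_succ]

lemma gaussKer_cons {m : ℕ} (t x : ℝ) (z : Fin m → ℝ) :
    gaussKer (m + 1) t (Fin.cons x z)
      = exp (-(x ^ 2 + ∑ j, z j ^ 2) / (4 * t)) / (2 * √(π * t)) ^ (m + 1) := by
  rw [gaussKer, sum_sq_cons]

lemma d2GaussKer_cons {m : ℕ} (hn : 0 < m + 1) (t x : ℝ) (z : Fin m → ℝ) :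
    d2GaussKer (m + 1) hn t (Fin.cons x z)
      = (x ^ 2 / (4 * t ^ 2) - 1 / (2 * t)) * gaussKer (m + 1) t (Fin.cons x z) := by
  have h0 : (⟨0, hn⟩ : Fin (m + 1)) = 0 := rfl
  have hderiv : deriv (fun v => exp (-(v ^ 2 + ∑ j, z j ^ 2) / (4 * t)) / (2 * √(π * t)) ^ (m + 1))
      = fun v => -(v / (2 * t)) * exp (-(v ^ 2 + ∑ j, z j ^ 2) / (4 * t))
          / (2 * √(π * t)) ^ (m + 1) :=
    funext fun v => ((hasDerivAt_exp_neg_sq_add_div _ _ v).div_const _).deriv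
  simp only [d2GaussKer, h0, Fin.update_cons_zero, Fin.cons_zero, gaussKer_cons]
  rw [hderiv, ((hasDerivAt_mul_exp_neg_sq_add_div _ _ _).div_const _).deriv]
  ring

lemma d2GaussKer_eq {m : ℕ} (hn : 0 < m + 1) (t : ℝ) (y : Fin (m + 1) → ℝ) :
    d2GaussKer (m + 1) hn t y
      = (y 0 ^ 2 / (4 * t ^ 2) - 1 / (2 * t)) * gaussKer (m + 1) t y := by
  simpa using d2GaussKer_cons hn t (y 0) (Fin.tail y)

lemma continuous_d2GaussKer {m : ℕ} (hn : 0 < m + 1) (t : ℝ) :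
    Continuous (d2GaussKer (m + 1) hn t) := by
  simp_rw [funext (d2GaussKer_eq hn t), gaussKer]
  fun_prop

lemma integral_indicator_sq_add_lt (t w ε : ℝ) :
    ∫ x, {x : ℝ | x ^ 2 + w < ε ^ 2}.indicator
        (fun x => (x ^ 2 / (4 * t ^ 2) - 1 / (2 * t)) * exp (-(x ^ 2 + w) / (4 * t))) x
      = -(√(ε ^ 2 - w) / t) * exp (-ε ^ 2 / (4 * t)) := by
  rcases lt_or_ge w (ε ^ 2) with hw | hw
  · set a := √(ε ^ 2 - w)
    have ha : a ^ 2 = ε ^ 2 - w := sq_sqrt (by linarith)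
    have hset : {x : ℝ | x ^ 2 + w < ε ^ 2} = Ioo (-a) a := by
      ext x
      rw [mem_ofPred_eq, mem_Ioo, ← abs_lt, ← abs_of_nonneg (show 0 ≤ a from sqrt_nonneg _),
        ← sq_lt_sq, ha]
      constructor <;> intro h <;> linarith
    rw [hset, integral_indicator measurableSet_Ioo, ← integral_Ioc_eq_integral_Ioo,
      ← intervalIntegral.integral_of_le (by linarith [sqrt_nonneg (ε ^ 2 - w)]),
      intervalIntegral.integral_eq_sub_of_hasDerivAt
        (fun x _ => hasDerivAt_mul_exp_neg_sq_add_div t w x)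
        (Continuous.intervalIntegrable (by fun_prop) _ _),
      neg_sq, ha, sub_add_cancel]
    ring
  · have hset : {x : ℝ | x ^ 2 + w < ε ^ 2} = ∅ :=
      eq_empty_of_forall_notMem fun x hx => (sq_nonneg x).not_gt (by simp at hx; linarith)
    simp [hset, sqrt_eq_zero_of_nonpos (sub_nonpos.2 hw)]

lemma isBounded_setOf_sum_sq_lt (k : ℕ) (r : ℝ) :
    Bornology.IsBounded {z : Fin k → ℝ | ∑ j, z j ^ 2 < r} := by
  refine (Metric.isBounded_closedBall (x := 0) (r := √r)).subset fun z hz => ?_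
  rw [mem_closedBall_zero_iff, pi_norm_le_iff_of_nonneg (sqrt_nonneg r)]
  exact fun i => abs_le_sqrt
    ((Finset.single_le_sum (fun j _ => sq_nonneg (z j)) (Finset.mem_univ i)).trans hz.le)

lemma measurableSet_setOf_sum_sq_lt (k : ℕ) (r : ℝ) :
    MeasurableSet {z : Fin k → ℝ | ∑ j, z j ^ 2 < r} :=
  (isOpen_lt (by fun_prop) continuous_const).measurableSet

lemma Continuous.integrableOn_setOf_sum_sq_lt {k : ℕ} {f : (Fin k → ℝ) → ℝ} (hf : Continuous f)
    (r : ℝ) : IntegrableOn f {z : Fin k → ℝ | ∑ j, z j ^ 2 < r} :=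
  (hf.continuousOn.integrableOn_compact
    (isBounded_setOf_sum_sq_lt k r).isCompact_closure).mono_set subset_closure

lemma integral_eq_integral_integral_cons {m : ℕ} {f : (Fin (m + 1) → ℝ) → ℝ}
    (hf : Integrable f) : ∫ y, f y = ∫ z : Fin m → ℝ, ∫ x : ℝ, f (Fin.cons x z) := by
  have he := (volume_preserving_piFinSuccAbove (fun _ : Fin (m + 1) => ℝ) 0).symm
  have hcons : ∀ p : ℝ × (Fin m → ℝ),
      (MeasurableEquiv.piFinSuccAbove (fun _ => ℝ) 0).symm p = Fin.cons p.1 p.2 := fun _ => by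
    rw [MeasurableEquiv.piFinSuccAbove_symm_apply, Fin.insertNthEquiv_zero]
    rfl
  rw [← he.integral_comp (MeasurableEquiv.measurableEmbedding _), Measure.volume_eq_prod,
    integral_prod_symm]
  · simp only [hcons]
  · rw [← Measure.volume_eq_prod]
    exact (he.integrable_comp_emb (MeasurableEquiv.measurableEmbedding _)).2 hf

lemma integral_sqrt_sq_sub_sum_sq {m : ℕ} {ε : ℝ} (hε : 0 < ε) :
    ∫ z : Fin m → ℝ, √(ε ^ 2 - ∑ j, z j ^ 2)
      = ε ^ (m + 1) * ∫ z in {z : Fin m → ℝ | ∑ j, z j ^ 2 < 1}, √(1 - ∑ j, z j ^ 2) := by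
  have hball : ∫ z in {z : Fin m → ℝ | ∑ j, z j ^ 2 < 1}, √(1 - ∑ j, z j ^ 2)
      = ∫ z : Fin m → ℝ, √(1 - ∑ j, z j ^ 2) :=
    setIntegral_eq_integral_of_forall_compl_eq_zero fun z hz =>
      sqrt_eq_zero_of_nonpos (by simp only [mem_ofPred_eq, not_lt] at hz; linarith)
  have hscale (z : Fin m → ℝ) : √(ε ^ 2 - ∑ j, (ε • z) j ^ 2) = ε * √(1 - ∑ j, z j ^ 2) := by
    simp only [Pi.smul_apply, smul_eq_mul, mul_pow, ← Finset.mul_sum]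
    rw [← mul_one_sub, sqrt_mul (sq_nonneg ε), sqrt_sq hε.le]
  have h := Measure.integral_comp_smul volume (fun z : Fin m → ℝ => √(ε ^ 2 - ∑ j, z j ^ 2)) ε
  simp only [hscale, integral_const_mul, Module.finrank_fin_fun, abs_inv, abs_pow,
    abs_of_pos hε, smul_eq_mul] at h
  rw [hball, pow_succ ε m, mul_assoc, h]
  field_simp

lemma rpow_neg_half_sub_one {t : ℝ} (ht : 0 < t) (k : ℕ) :
    t ^ (-(k : ℝ) / 2 - 1) = (√t ^ k * t)⁻¹ := by
  rw [sqrt_eq_rpow, ← rpow_natCast, ← rpow_mul ht.le, ← rpow_add_one ht.ne', ← rpow_neg ht.le]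
  ring_nf

lemma setIntegral_d2GaussKer {m : ℕ} (hn : 0 < m + 1) {t ε : ℝ} (ht : 0 < t) (hε : 0 < ε) :
    ∫ y in {y : Fin (m + 1) → ℝ | √(∑ j, y j ^ 2) < ε}, d2GaussKer (m + 1) hn t y
      = -Mconst (m + 1) *
          (ε ^ (m + 1) * exp (-ε ^ 2 / (4 * t)) * t ^ (-((m + 1 : ℕ) : ℝ) / 2 - 1)) := by
  have hball : {y : Fin (m + 1) → ℝ | √(∑ j, y j ^ 2) < ε} = {y | ∑ j, y j ^ 2 < ε ^ 2} := by
    ext y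
    simp [sqrt_lt' hε]
  have hslice (z : Fin m → ℝ) (x : ℝ) :
      {y : Fin (m + 1) → ℝ | ∑ j, y j ^ 2 < ε ^ 2}.indicator (d2GaussKer (m + 1) hn t)
          (Fin.cons x z)
        = {x : ℝ | x ^ 2 + ∑ j, z j ^ 2 < ε ^ 2}.indicator (fun x =>
            (x ^ 2 / (4 * t ^ 2) - 1 / (2 * t)) * exp (-(x ^ 2 + ∑ j, z j ^ 2) / (4 * t))) x
          / (2 * √(π * t)) ^ (m + 1) := by
    simp only [indicator, mem_ofPred_eq, sum_sq_cons]
    split_ifs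
    · rw [d2GaussKer_cons, gaussKer_cons, mul_div_assoc]
    · rw [zero_div]
  have hint : Integrable ({y | ∑ j, y j ^ 2 < ε ^ 2}.indicator (d2GaussKer (m + 1) hn t)) :=
    (integrable_indicator_iff (measurableSet_setOf_sum_sq_lt _ _)).2
      ((continuous_d2GaussKer hn t).integrableOn_setOf_sum_sq_lt _)
  rw [hball, ← integral_indicator (measurableSet_setOf_sum_sq_lt _ _),
    integral_eq_integral_integral_cons hint]
  simp_rw [hslice, integral_div, integral_indicator_sq_add_lt]
  rw [integral_mul_const, integral_neg, integral_div, integral_sqrt_sq_sub_sum_sq hε,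
    rpow_neg_half_sub_one ht, Mconst, Nat.add_sub_cancel, sqrt_mul pi_pos.le, mul_pow]
  field_simp
  ring

lemma Mconst_pos (n : ℕ) : 0 < Mconst n := by
  refine mul_pos (by positivity) ?_
  have hopen : IsOpen {z : Fin (n - 1) → ℝ | ∑ j, z j ^ 2 < 1} :=
    isOpen_lt (by fun_prop) continuous_const
  have hsupp : (Function.support fun z : Fin (n - 1) → ℝ => √(1 - ∑ j, z j ^ 2)) ∩
      {z | ∑ j, z j ^ 2 < 1} = {z | ∑ j, z j ^ 2 < 1} :=
    inter_eq_right.2 fun z hz => (sqrt_pos.2 (sub_pos.2 hz)).ne'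
  have hcont : Continuous fun z : Fin (n - 1) → ℝ => √(1 - ∑ j, z j ^ 2) := by fun_prop
  rw [setIntegral_pos_iff_support_of_nonneg_ae (Eventually.of_forall fun _ => sqrt_nonneg _)
    (hcont.integrableOn_setOf_sum_sq_lt _), hsupp]
  exact hopen.measure_pos volume ⟨0, by simp⟩

lemma integrableOn_exp_neg_inv_mul_rpow {p : ℝ} (hp : p < -1) :
    IntegrableOn (fun s => exp (-1 / (4 * s)) * s ^ p) (Ioi 0) := by
  -- `s = x⁻¹` turns the integrand into the Gamma-type `x ^ (-p - 2) * exp (-x / 4)`.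
  rw [← integrableOn_Ioi_comp_rpow_iff' _ (by norm_num : (-1 : ℝ) ≠ 0)]
  refine (integrableOn_rpow_mul_exp_neg_mul_rpow (s := -p - 2) (by linarith) one_pos
    (by norm_num : (0 : ℝ) < 1 / 4)).congr_fun (fun x (hx : 0 < x) => ?_) measurableSet_Ioi
  simp only [smul_eq_mul, rpow_neg_one, rpow_one]
  rw [inv_rpow hx.le, ← rpow_neg hx.le, show (-1 : ℝ) - 1 = -2 by norm_num, mul_left_comm,
    ← rpow_add hx]
  field_simp
  ring_nf

lemma MeasureTheory.MemLp.ae_norm_le_eLpNorm_top {α E : Type*} [MeasurableSpace α]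
    [NormedAddCommGroup E] {μ : Measure α} {f : α → E} (hf : MemLp f ⊤ μ) :
    ∀ᵐ x ∂μ, ‖f x‖ ≤ (eLpNorm f ⊤ μ).toReal := by
  filter_upwards [ae_le_eLpNormEssSup (f := f) (μ := μ)] with x hx
  rw [← eLpNorm_exponent_top] at hx
  simpa using ENNReal.toReal_mono hf.2.ne hx

lemma tendsto_setIntegral_comp_mul_mul {ψ A : ℝ → ℝ} {L : ℝ}
    (hψ : MemLp ψ ⊤ (volume.restrict (Ioi 0))) (hψL : Tendsto ψ (𝓝[>] 0) (𝓝 L))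
    (hA : IntegrableOn A (Ioi 0)) :
    Tendsto (fun c => ∫ s in Ioi 0, ψ (c * s) * A s) (𝓝[>] 0)
      (𝓝 (L * ∫ s in Ioi 0, A s)) := by
  have hqmp {c : ℝ} (hc : 0 < c) : Measure.QuasiMeasurePreserving (c * ·)
      (volume.restrict (Ioi 0)) (volume.restrict (Ioi 0)) :=
    (Measure.quasiMeasurePreserving_smul volume hc.ne').restrict fun s hs => mul_pos hc hs
  rw [← integral_const_mul]
  refine tendsto_integral_filter_of_dominated_convergence
    (fun s => (eLpNorm ψ ⊤ (volume.restrict (Ioi 0))).toReal * ‖A s‖) ?_ ?_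
    (hA.norm.const_mul _) ?_
  · filter_upwards [self_mem_nhdsWithin] with c hc
    exact (hψ.1.comp_quasiMeasurePreserving (hqmp hc)).mul hA.1
  · filter_upwards [self_mem_nhdsWithin] with c hc
    filter_upwards [(hqmp hc).ae hψ.ae_norm_le_eLpNorm_top] with s hs
    rw [norm_mul]
    exact mul_le_mul_of_nonneg_right hs (norm_nonneg _)
  · filter_upwards [ae_restrict_mem measurableSet_Ioi] with s hs
    have hcs : Tendsto (· * s) (𝓝[>] 0) (𝓝[>] 0) := by
      simpa using (continuous_mul_const s).continuousWithinAt.tendsto_nhdsWithin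
        (x := 0) (s := Ioi 0) (t := Ioi 0) fun c (hc : 0 < c) => mul_pos hc hs
    exact (hψL.comp hcs).mul_const (A s)

lemma alphaFun_eq {m : ℕ} (hn : 0 < m + 1) (φ : ℝ → ℝ) {ε : ℝ} (hε : 0 < ε) :
    alphaFun (m + 1) hn φ ε = -Mconst (m + 1) * ∫ s in Ioi 0, (Ioc 0 1).indicator φ (ε ^ 2 * s) *
      (exp (-1 / (4 * s)) * s ^ (-((m + 1 : ℕ) : ℝ) / 2 - 1)) := by
  set p : ℝ := -((m + 1 : ℕ) : ℝ) / 2 - 1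
  set K : ℝ → ℝ := fun t => ε ^ (m + 1) * exp (-ε ^ 2 / (4 * t)) * t ^ p
  have hε2 : 0 < ε ^ 2 := by positivity
  have hinner : alphaFun (m + 1) hn φ ε = ∫ t in Ioc 0 1, -Mconst (m + 1) * (φ t * K t) :=
    setIntegral_congr_fun measurableSet_Ioc fun t ht => by
      rw [setIntegral_d2GaussKer hn ht.1 hε]
      ring
  have hscale {s : ℝ} (hs : 0 < s) : ε ^ 2 * K (ε ^ 2 * s) = exp (-1 / (4 * s)) * s ^ p := by
    have hεs : 0 < ε ^ 2 * s := by positivity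
    simp only [K, p, rpow_neg_half_sub_one hs, rpow_neg_half_sub_one hεs, sqrt_mul hε2.le,
      sqrt_sq hε.le, mul_pow]
    field_simp
  rw [hinner, integral_const_mul]
  congr 1
  calc ∫ t in Ioc 0 1, φ t * K t
      = ∫ t in Ioi 0, (Ioc 0 1).indicator φ t * K t := by
        simp_rw [← indicator_mul_left, setIntegral_indicator measurableSet_Ioc,
          inter_eq_right.2 Ioc_subset_Ioi_self]
    _ = ε ^ 2 * ∫ s in Ioi 0, (Ioc 0 1).indicator φ (ε ^ 2 * s) * K (ε ^ 2 * s) := by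
        simpa only [mul_zero, smul_eq_mul] using
          (integral_comp_mul_left_Ioi' (fun t => (Ioc 0 1).indicator φ t * K t) 0 hε2).symm
    _ = _ := by
        rw [← integral_const_mul]
        refine setIntegral_congr_fun measurableSet_Ioi fun s hs => ?_
        rw [← hscale hs]
        ring

/-- For `n ≥ 2` and `φ ∈ L^∞((0,∞))` with `φ(0^+) = L`, one has `M > 0` and
`α(ε) → -M · L · ∫_0^∞ e^{-1/(4s)} s^{-n/2-1} ds` as `ε → 0^+`. -/
theorem alphaFun_limit (n : ℕ) (hn : 2 ≤ n) (φ : ℝ → ℝ)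
    (hφ : MemLp φ ⊤ (volume.restrict (Ioi (0 : ℝ))))
    (L : ℝ) (hφL : Filter.Tendsto φ (nhdsWithin 0 (Ioi 0)) (nhds L)) :
    0 < Mconst n ∧
      Filter.Tendsto (fun ε => alphaFun n (by omega) φ ε)
        (nhdsWithin 0 (Ioi 0))
        (nhds (-Mconst n * L *
          ∫ s in Ioi (0 : ℝ), Real.exp (-1 / (4 * s)) * s ^ (-(n : ℝ) / 2 - 1))) := by
  obtain ⟨m, rfl⟩ : ∃ m, n = m + 1 := ⟨n - 1, by omega⟩
  refine ⟨Mconst_pos _, ?_⟩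
  have hψ : MemLp ((Ioc 0 1).indicator φ) ⊤ (volume.restrict (Ioi 0)) :=
    hφ.indicator measurableSet_Ioc
  have hψL : Tendsto ((Ioc 0 1).indicator φ) (𝓝[>] 0) (𝓝 L) :=
    hφL.congr' (mem_of_superset (Ioo_mem_nhdsGT one_pos) fun t ht =>
      (indicator_of_mem (Ioo_subset_Ioc_self ht) φ).symm)
  have hA : IntegrableOn (fun s => exp (-1 / (4 * s)) * s ^ (-((m + 1 : ℕ) : ℝ) / 2 - 1))
      (Ioi 0) :=
    integrableOn_exp_neg_inv_mul_rpow (by linarith [(by positivity : (0 : ℝ) < (m + 1 : ℕ))])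
  have hsq : Tendsto (fun ε : ℝ => ε ^ 2) (𝓝[>] 0) (𝓝[>] 0) := by
    simpa using (continuous_pow 2).continuousWithinAt.tendsto_nhdsWithin
      (x := 0) (s := Ioi (0 : ℝ)) (t := Ioi 0) fun ε (hε : 0 < ε) => pow_pos hε 2
  have h := ((tendsto_setIntegral_comp_mul_mul hψ hψL hA).comp hsq).const_mul (-Mconst (m + 1))
  rw [← mul_assoc] at h
  exact h.congr' (eventually_nhdsWithin_of_forall fun ε hε => (alphaFun_eq _ φ hε).symm)
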